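/- arXiv:2001.10441 — 2 statements merged into one kernel-verified Lean document; each statement's English description precedes it below -/
import Mathlib

section
/- Let ⦀·⦀ be any norm on ℝ^d with dual unit sphere S⋆ = {y : ⦀y⦀⋆ = 1}. For every k ∈ {1,…,d}, the unit ball of the generalized k-support norm (the dual norm of the generalized top-k norm) equals the closed convex hull of the union, over subsets K ⊆ {1,…,d} with |K| ≤ k, of the sets π_K(S⋆). -/
open Finset Set

namespace OSMPaper

variable {d : ℕ}

/-- Standard inner product on `ℝ^d = Fin d → ℝ`. -/
def dot (x y : Fin d → ℝ) : ℝ := ∑ i, x i * y i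

/-- `N` is a norm on `ℝ^d`. -/
def IsNorm (N : (Fin d → ℝ) → ℝ) : Prop :=
  (∀ x, 0 ≤ N x) ∧ (∀ x, N x = 0 ↔ x = 0) ∧
  (∀ (c : ℝ) (x : Fin d → ℝ), N (c • x) = |c| * N x) ∧
  (∀ x y, N (x + y) ≤ N x + N y)

/-- `proj K x = x_K`, the vector coinciding with `x` on `K` and zero outside `K`. -/
def proj (K : Finset (Fin d)) (x : Fin d → ℝ) : Fin d → ℝ :=
  fun i => if i ∈ K then x i else 0

/-- The coordinate subspace `ℝ_K`. -/
def coordSubspace (K : Finset (Fin d)) : Set (Fin d → ℝ) :=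
  {x | ∀ j, j ∉ K → x j = 0}

/-- Orthant-monotonic norm. -/
def OrthantMonotonic (N : (Fin d → ℝ) → ℝ) : Prop :=
  ∀ x x' : Fin d → ℝ, (∀ i, |x i| ≤ |x' i|) → (∀ i, 0 ≤ x i * x' i) → N x ≤ N x'

/-- Orthant-strictly monotonic norm. -/
def OrthantStrictlyMonotonic (N : (Fin d → ℝ) → ℝ) : Prop :=
  ∀ x x' : Fin d → ℝ, (∀ i, |x i| ≤ |x' i|) → (∃ j, |x j| < |x' j|) →
    (∀ i, 0 ≤ x i * x' i) → N x < N x'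

/-- Dual norm `⦀y⦀⋆ = sup_{N x ≤ 1} ⟨x, y⟩`. -/
noncomputable def dualNorm (N : (Fin d → ℝ) → ℝ) (y : Fin d → ℝ) : ℝ :=
  sSup {r | ∃ x, N x ≤ 1 ∧ r = dot x y}

/-- Support function of a set `S`. -/
noncomputable def suppFn (S : Set (Fin d → ℝ)) (y : Fin d → ℝ) : ℝ :=
  sSup {r | ∃ x ∈ S, r = dot x y}

/-- Generalized top-`k` norm associated with the source norm `N`. -/
noncomputable def topNorm (N : (Fin d → ℝ) → ℝ) (k : ℕ) (x : Fin d → ℝ) : ℝ :=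
  sSup {r | ∃ K : Finset (Fin d), K.card ≤ k ∧ r = N (proj K x)}

/-- Generalized `k`-support norm: the dual norm of the generalized top-`k` norm. -/
noncomputable def supportNorm (N : (Fin d → ℝ) → ℝ) (k : ℕ) : (Fin d → ℝ) → ℝ :=
  dualNorm (topNorm N k)

/-- The ℓ0 pseudonorm: the number of nonzero components. -/
noncomputable def l0 (x : Fin d → ℝ) : ℕ := Set.ncard {i | x i ≠ 0}

/-- `x` is an extreme point of the convex set `C`. -/
def ExtremePt (C : Set (Fin d → ℝ)) (x : Fin d → ℝ) : Prop :=
  x ∈ C ∧ ∀ y ∈ C, ∀ z ∈ C, ∀ t : ℝ, 0 < t → t < 1 →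
    x = t • y + (1 - t) • z → y = x ∧ z = x

/-!
The unit ball of a dual norm is the polar of the primal unit ball. By the bipolar theorem the
unit ball of `N` is the polar of the dual sphere `S⋆`, so the unit ball of the top-`k` norm,
an intersection of such balls pulled back along the projections `π_K`, is the polar of
`U = ⋃_{|K| ≤ k} π_K(S⋆)`. The `k`-support unit ball is then the bipolar of `U`, which is the
closed convex hull of `U` because `0 = π_∅(y) ∈ U`.
-/

theorem dot_eq_dotProduct (x y : Fin d → ℝ) : dot x y = x ⬝ᵥ y := rfl

theorem dot_comm (x y : Fin d → ℝ) : dot x y = dot y x := dotProduct_comm x y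

theorem continuous_dot_left (y : Fin d → ℝ) : Continuous fun x => dot x y :=
  continuous_id.dotProduct continuous_const

theorem dot_proj_left (K : Finset (Fin d)) (x y : Fin d → ℝ) :
    dot (proj K x) y = dot x (proj K y) := by
  refine Finset.sum_congr rfl fun i _ => ?_
  by_cases h : i ∈ K <;> simp [proj, h]

theorem proj_empty (x : Fin d → ℝ) : proj ∅ x = 0 := by
  funext i
  simp [proj]

theorem proj_zero (K : Finset (Fin d)) : proj K 0 = 0 := by
  funext i
  simp [proj]

theorem proj_singleton (i : Fin d) (x : Fin d → ℝ) :
    proj {i} x = Pi.single i (x i) := by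
  funext j
  by_cases h : j = i <;> simp [proj, h]

theorem StrongDual.exists_eq_dot (f : StrongDual ℝ (Fin d → ℝ)) : ∃ v, ∀ x, f x = dot v x :=
  ⟨(dotProductEquiv ℝ (Fin d)).symm f.toLinearMap, fun x => by
    rw [dot_eq_dotProduct, ← dotProductEquiv_apply_apply, LinearEquiv.apply_symm_apply]
    rfl⟩

/-- One-sided polar, unlike Mathlib's `LinearMap.polar`, which bounds `‖B x y‖`. -/
def polar (S : Set (Fin d → ℝ)) : Set (Fin d → ℝ) := {y | ∀ x ∈ S, dot x y ≤ 1}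

section Polar

variable {S T C : Set (Fin d → ℝ)}

theorem polar_anti (h : S ⊆ T) : polar T ⊆ polar S := fun _ hy x hx => hy x (h hx)

theorem isClosed_polar (S : Set (Fin d → ℝ)) : IsClosed (polar S) := by
  simp_rw [polar, dot_comm _ (_ : Fin d → ℝ), Set.ofPred_forall]
  exact isClosed_biInter fun x _ => isClosed_le (continuous_dot_left x) continuous_const

theorem convex_polar (S : Set (Fin d → ℝ)) : Convex ℝ (polar S) := by
  intro y hy z hz a b ha hb hab x hx
  calc dot x (a • y + b • z) = a * dot x y + b * dot x z := by
        simp only [dot_eq_dotProduct, dotProduct_add, dotProduct_smul, smul_eq_mul]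
    _ ≤ a * 1 + b * 1 := by gcongr <;> [exact hy x hx; exact hz x hx]
    _ = 1 := by rw [mul_one, mul_one, hab]

theorem subset_polar_polar (S : Set (Fin d → ℝ)) : S ⊆ polar (polar S) :=
  fun x hx y hy => dot_comm y x ▸ hy x hx

/-- Since `0 ∈ C`, a hyperplane separating `z ∉ C` from `C` has positive level and can be
rescaled to level `1`. -/
theorem polar_polar_subset (hconv : Convex ℝ C) (hclosed : IsClosed C) (h0 : 0 ∈ C) :
    polar (polar C) ⊆ C := by
  intro z hz
  by_contra hzC
  obtain ⟨f, u, hfC, hfz⟩ := geometric_hahn_banach_closed_point hconv hclosed hzC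
  obtain ⟨v, hv⟩ := StrongDual.exists_eq_dot f
  have hu : 0 < u := by simpa using hfC 0 h0
  have hscaled (x : Fin d → ℝ) : dot (u⁻¹ • v) x = u⁻¹ * f x := by
    rw [hv, dot_eq_dotProduct, dot_eq_dotProduct, smul_dotProduct, smul_eq_mul]
  have hmem : u⁻¹ • v ∈ polar C := fun x hx => by
    rw [dot_comm, hscaled, inv_mul_le_one₀ hu]
    exact (hfC x hx).le
  have hz_le := hz _ hmem
  rw [hscaled, inv_mul_le_one₀ hu] at hz_le
  exact hfz.not_ge hz_le

theorem polar_polar_eq_closure_convexHull (h0 : 0 ∈ convexHull ℝ S) :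
    polar (polar S) = closure (convexHull ℝ S) := by
  refine le_antisymm ?_ ?_
  · calc polar (polar S) ⊆ polar (polar (closure (convexHull ℝ S))) :=
          polar_anti (polar_anti (subset_closure.trans' (subset_convexHull ℝ S)))
      _ ⊆ closure (convexHull ℝ S) :=
          polar_polar_subset (convex_convexHull ℝ S).closure isClosed_closure (subset_closure h0)
  · exact closure_minimal (convexHull_min (subset_polar_polar S) (convex_polar _))
      (isClosed_polar _)

end Polar

section DualNorm

variable {M : (Fin d → ℝ) → ℝ}

theorem bddAbove_dot_of_isBounded (hM : Bornology.IsBounded {x | M x ≤ 1}) (y : Fin d → ℝ) :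
    BddAbove {r | ∃ x, M x ≤ 1 ∧ r = dot x y} := by
  refine ((hM.isCompact_closure.image (continuous_dot_left y)).bddAbove).mono ?_
  rintro _ ⟨x, hx, rfl⟩
  exact ⟨x, subset_closure hx, rfl⟩

theorem dot_le_dualNorm (hM : Bornology.IsBounded {x | M x ≤ 1}) {x : Fin d → ℝ} (hx : M x ≤ 1)
    (y : Fin d → ℝ) : dot x y ≤ dualNorm M y :=
  le_csSup (bddAbove_dot_of_isBounded hM y) ⟨x, hx, rfl⟩

theorem dualNorm_unitBall_eq_polar (hM0 : M 0 ≤ 1) (hM : Bornology.IsBounded {x | M x ≤ 1}) :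
    {y | dualNorm M y ≤ 1} = polar {x | M x ≤ 1} := by
  ext y
  refine ⟨fun hy x hx => (dot_le_dualNorm hM hx y).trans hy, fun hy => ?_⟩
  change dualNorm M y ≤ 1
  refine csSup_le ?_ ?_
  · exact ⟨0, 0, hM0, by simp [dot_eq_dotProduct]⟩
  · rintro _ ⟨x, hx, rfl⟩
    exact hy x hx

theorem dualNorm_smul {c : ℝ} (hc : 0 ≤ c) (y : Fin d → ℝ) :
    dualNorm M (c • y) = c * dualNorm M y := by
  rw [dualNorm, dualNorm, ← smul_eq_mul, ← Real.sSup_smul_of_nonneg hc]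
  congr 1
  ext r
  simp only [Set.mem_ofPred_eq, Set.mem_smul_set, smul_eq_mul, dot_eq_dotProduct, dotProduct_smul]
  constructor
  · rintro ⟨x, hx, rfl⟩
    exact ⟨_, ⟨x, hx, rfl⟩, rfl⟩
  · rintro ⟨_, ⟨x, hx, rfl⟩, rfl⟩
    exact ⟨x, hx, rfl⟩

end DualNorm

namespace IsNorm

variable {N : (Fin d → ℝ) → ℝ} (hN : IsNorm N)
include hN

theorem map_zero : N 0 = 0 := (hN.2.1 0).2 rfl

theorem map_smul (c : ℝ) (x : Fin d → ℝ) : N (c • x) = |c| * N x := hN.2.2.1 c x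

theorem add_le (x y : Fin d → ℝ) : N (x + y) ≤ N x + N y := hN.2.2.2 x y

theorem pos {x : Fin d → ℝ} (hx : x ≠ 0) : 0 < N x :=
  (hN.1 x).lt_of_ne fun h => hx ((hN.2.1 x).1 h.symm)

theorem convexOn : ConvexOn ℝ univ N := by
  refine ⟨convex_univ, fun x _ y _ a b ha hb _ => (hN.add_le _ _).trans_eq ?_⟩
  rw [hN.map_smul, hN.map_smul, abs_of_nonneg ha, abs_of_nonneg hb, smul_eq_mul, smul_eq_mul]

theorem continuous : Continuous N :=
  continuousOn_univ.mp (hN.convexOn.continuousOn isOpen_univ)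

theorem isBounded_unitBall : Bornology.IsBounded {x | N x ≤ 1} := by
  obtain ⟨c, hc, hcN⟩ := (isCompact_sphere (0 : Fin d → ℝ) 1).exists_forall_le'
    hN.continuous.continuousOn fun x hx => hN.pos (ne_zero_of_mem_unit_sphere ⟨x, hx⟩)
  refine (Metric.isBounded_closedBall (x := 0) (r := c⁻¹)).subset fun x hx => ?_
  rw [mem_closedBall_zero_iff]
  rcases eq_or_ne x 0 with rfl | hx0
  · simpa using hc.le
  have hnorm : 0 < ‖x‖ := norm_pos_iff.2 hx0
  have hsphere : ‖x‖⁻¹ • x ∈ Metric.sphere (0 : Fin d → ℝ) 1 := by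
    simp [norm_smul, hnorm.ne']
  have := hcN _ hsphere
  rw [hN.map_smul, abs_of_pos (inv_pos.2 hnorm)] at this
  rw [← le_inv_comm₀ hc hnorm]
  calc c ≤ ‖x‖⁻¹ * N x := this
    _ ≤ ‖x‖⁻¹ * 1 := by gcongr; exact hx
    _ = ‖x‖⁻¹ := mul_one _

theorem dualNorm_pos {y : Fin d → ℝ} (hy : y ≠ 0) : 0 < dualNorm N y := by
  have hdot : 0 < dot ((N y)⁻¹ • y) y := by
    rw [dot_eq_dotProduct, smul_dotProduct, smul_eq_mul]
    exact mul_pos (inv_pos.2 (hN.pos hy)) (by simpa using Matrix.dotProduct_star_self_pos_iff.2 hy)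
  refine hdot.trans_le (dot_le_dualNorm hN.isBounded_unitBall ?_ y)
  rw [hN.map_smul, abs_of_pos (inv_pos.2 (hN.pos hy)), inv_mul_cancel₀ (hN.pos hy).ne']

theorem nonempty_dualSphere (hd : 0 < d) : {y : Fin d → ℝ | dualNorm N y = 1}.Nonempty := by
  set y : Fin d → ℝ := Pi.single ⟨0, hd⟩ 1
  have hy : 0 < dualNorm N y := hN.dualNorm_pos (by simp [y])
  exact ⟨(dualNorm N y)⁻¹ • y, by rw [Set.mem_ofPred_eq, dualNorm_smul (inv_nonneg.2 hy.le),
    inv_mul_cancel₀ hy.ne']⟩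

theorem unitBall_eq_polar_dualSphere :
    {x | N x ≤ 1} = polar {y | dualNorm N y = 1} := by
  have hbipolar : polar (polar {x | N x ≤ 1}) = {x | N x ≤ 1} :=
    (polar_polar_subset (by simpa using hN.convexOn.convex_le 1)
      (isClosed_le hN.continuous continuous_const) (by simp [hN.map_zero])).antisymm
      (subset_polar_polar _)
  rw [← hbipolar, ← dualNorm_unitBall_eq_polar (by simp [hN.map_zero]) hN.isBounded_unitBall]
  refine (polar_anti fun y (hy : dualNorm N y = 1) => hy.le).antisymm fun z hz y hy => ?_
  rcases eq_or_ne y 0 with rfl | hy0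
  · simp [dot_eq_dotProduct]
  have ht := hN.dualNorm_pos hy0
  set t := dualNorm N y
  have hunit : dualNorm N (t⁻¹ • y) = 1 := by
    rw [dualNorm_smul (inv_nonneg.2 ht.le), inv_mul_cancel₀ ht.ne']
  calc dot y z = t * dot (t⁻¹ • y) z := by
        rw [dot_eq_dotProduct, dot_eq_dotProduct, smul_dotProduct, smul_eq_mul,
          mul_inv_cancel_left₀ ht.ne']
    _ ≤ t * 1 := by gcongr; exact hz _ hunit
    _ ≤ 1 := by rw [mul_one]; exact hy

end IsNorm

section TopNorm

variable {N : (Fin d → ℝ) → ℝ} {k : ℕ}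

theorem topNorm_le_iff {x : Fin d → ℝ} {r : ℝ} :
    topNorm N k x ≤ r ↔ ∀ K : Finset (Fin d), K.card ≤ k → N (proj K x) ≤ r := by
  have hfin : {r | ∃ K : Finset (Fin d), K.card ≤ k ∧ r = N (proj K x)}.Finite :=
    (Set.finite_range fun K : Finset (Fin d) => N (proj K x)).subset fun _ ⟨K, _, hK⟩ => ⟨K, hK.symm⟩
  rw [topNorm, csSup_le_iff hfin.bddAbove ⟨_, ∅, by simp, rfl⟩]
  simp only [Set.mem_ofPred_eq, forall_exists_index, and_imp]
  exact ⟨fun h K hK => h _ K hK rfl, fun h _ K hK hr => hr ▸ h K hK⟩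

theorem topNorm_unitBall_eq_polar (hN : IsNorm N) :
    {x | topNorm N k x ≤ 1} =
      polar (⋃ (K : Finset (Fin d)) (_ : K.card ≤ k), proj K '' {y | dualNorm N y = 1}) := by
  ext x
  have hball (K : Finset (Fin d)) :
      N (proj K x) ≤ 1 ↔ ∀ y, dualNorm N y = 1 → dot (proj K y) x ≤ 1 := by
    simp_rw [dot_proj_left]
    exact Set.ext_iff.1 hN.unitBall_eq_polar_dualSphere (proj K x)
  simp only [Set.mem_ofPred_eq, topNorm_le_iff, hball, polar, Set.mem_iUnion, Set.mem_image]
  grind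

theorem isBounded_topNorm_unitBall (hN : IsNorm N) (hk : 1 ≤ k) :
    Bornology.IsBounded {x | topNorm N k x ≤ 1} := by
  obtain ⟨C, hC⟩ := isBounded_iff_forall_norm_le.1 hN.isBounded_unitBall
  have hC0 : 0 ≤ C := (norm_nonneg _).trans (hC 0 (by simp [hN.map_zero]))
  refine isBounded_iff_forall_norm_le.2 ⟨C, fun x hx => (pi_norm_le_iff_of_nonneg hC0).2 fun i => ?_⟩
  have hi : N (proj {i} x) ≤ 1 := topNorm_le_iff.1 hx {i} (by simpa using hk)
  simpa [proj_singleton, Pi.norm_single] using hC _ hi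

end TopNorm

theorem supportNorm_unitBall_eq_closedConvexHull_general
    (hd : 0 < d) (N : (Fin d → ℝ) → ℝ) (hN : IsNorm N)
    (k : ℕ) (hk1 : 1 ≤ k) :
    {y : Fin d → ℝ | supportNorm N k y ≤ 1} =
      closure (convexHull ℝ
        (⋃ (K : Finset (Fin d)) (_ : K.card ≤ k),
          proj K '' {y : Fin d → ℝ | dualNorm N y = 1})) := by
  obtain ⟨y, hy⟩ := hN.nonempty_dualSphere hd
  have h0 : (0 : Fin d → ℝ) ∈ convexHull ℝ
      (⋃ (K : Finset (Fin d)) (_ : K.card ≤ k), proj K '' {y | dualNorm N y = 1}) :=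
    subset_convexHull ℝ _ (Set.mem_iUnion₂.2 ⟨∅, by simp, y, hy, proj_empty y⟩)
  have htop0 : topNorm N k 0 ≤ 1 := topNorm_le_iff.2 fun K _ => by
    rw [proj_zero, hN.map_zero]
    exact zero_le_one
  rw [supportNorm, dualNorm_unitBall_eq_polar htop0 (isBounded_topNorm_unitBall hN hk1),
    topNorm_unitBall_eq_polar hN, polar_polar_eq_closure_convexHull h0]

/-- the unit ball of the generalized k-support norm is the closed
convex hull of the union of the sets `π_K(S⋆)` over `|K| ≤ k`. -/
theorem supportNorm_unitBall_eq_closedConvexHull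
    (hd : 0 < d) (N : (Fin d → ℝ) → ℝ) (hN : IsNorm N)
    (k : ℕ) (hk1 : 1 ≤ k) (hkd : k ≤ d) :
    {y : Fin d → ℝ | supportNorm N k y ≤ 1} =
      closure (convexHull ℝ
        (⋃ (K : Finset (Fin d)) (_ : K.card ≤ k),
          proj K '' {y : Fin d → ℝ | dualNorm N y = 1})) :=
  supportNorm_unitBall_eq_closedConvexHull_general hd N hN k hk1

end OSMPaper
end

section
/- If a norm ⦀·⦀ on ℝ^d is orthant-monotonic, then the sequence of generalized top-k norms is nondecreasing in k and is increasingly graded with respect to the ℓ0 pseudonorm: for every x ∈ ℝ^d and every l ∈ {0,1,…,d}, if ℓ0(x) ≤ l then ⦀x⦀^top_l = ⦀x⦀^top_d = ⦀x⦀ (with ⦀x⦀^top_0 understood only for x = 0). -/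
open Finset Set

namespace OSMPaper

variable {d : ℕ}

lemma topSet_finite (N : (Fin d → ℝ) → ℝ) (k : ℕ) (x : Fin d → ℝ) :
    ({r | ∃ K : Finset (Fin d), K.card ≤ k ∧ r = N (proj K x)}).Finite := by
  apply (Set.finite_range (fun K : Finset (Fin d) => N (proj K x))).subset
  rintro r ⟨K, _, rfl⟩; exact ⟨K, rfl⟩

lemma topSet_nonempty (N : (Fin d → ℝ) → ℝ) (k : ℕ) (x : Fin d → ℝ) :
    ({r | ∃ K : Finset (Fin d), K.card ≤ k ∧ r = N (proj K x)}).Nonempty :=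
  ⟨N (proj ∅ x), ∅, by simp⟩

lemma proj_le (N : (Fin d → ℝ) → ℝ) (hom : OrthantMonotonic N)
    (K : Finset (Fin d)) (x : Fin d → ℝ) : N (proj K x) ≤ N x := by
  apply hom
  · intro i; unfold proj; split <;> simp [abs_nonneg]
  · intro i; unfold proj; split
    · exact mul_self_nonneg _
    · simp

/-- for an orthant-monotonic source norm, the sequence of
generalized top-k norms is nondecreasing and increasingly graded with respect
to the ℓ0 pseudonorm. -/
theorem topNorm_increasingly_graded_of_orthantMonotonic
    (hd : 0 < d) (N : (Fin d → ℝ) → ℝ) (hN : IsNorm N)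
    (hom : OrthantMonotonic N) :
    (∀ (x : Fin d → ℝ) (k l : ℕ), 1 ≤ k → k ≤ l → l ≤ d →
      topNorm N k x ≤ topNorm N l x) ∧
    (∀ (x : Fin d → ℝ) (l : ℕ), l ≤ d → l0 x ≤ l →
      topNorm N l x = topNorm N d x ∧ topNorm N d x = N x) := by
  have hmono : ∀ (x : Fin d → ℝ) (k l : ℕ), k ≤ l → topNorm N k x ≤ topNorm N l x := by
    intro x k l hkl
    apply csSup_le_csSup (topSet_finite N l x).bddAbove (topSet_nonempty N k x)
    rintro r ⟨K, hK, rfl⟩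
    exact ⟨K, hK.trans hkl, rfl⟩
  have heq : ∀ (x : Fin d → ℝ) (l : ℕ), l0 x ≤ l → topNorm N l x = N x := by
    intro x l hl
    apply le_antisymm
    · apply csSup_le (topSet_nonempty N l x)
      rintro r ⟨K, _, rfl⟩
      exact proj_le N hom K x
    · apply le_csSup (topSet_finite N l x).bddAbove
      refine ⟨{i | x i ≠ 0}.toFinset, ?_, ?_⟩
      · rwa [← Set.ncard_eq_toFinset_card']
      · congr 1; funext i
        unfold proj
        by_cases h : x i = 0 <;> simp [h]
  refine ⟨fun x k l _ hkl _ => hmono x k l hkl, fun x l hl hl0 => ?_⟩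
  have h1 : topNorm N l x = N x := heq x l hl0
  have h2 : topNorm N d x = N x := heq x d (hl0.trans hl)
  exact ⟨h1.trans h2.symm, h2⟩

end OSMPaper
end
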